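/- arXiv:1812.11222 — 2 statements merged into one kernel-verified Lean document; each statement's English description precedes it below -/
import Mathlib

section
/- Let A and X be order-enriched categories such that A has inserters. An order-enriched functor P : A → X is strongly order-solid if and only if P is solid as an ordinary functor, order-faithful, and preserves inserters. -/
open CategoryTheory

universe w v u v' u'

section Defs

variable {A : Type u} [Category.{v} A] [∀ a b : A, PartialOrder (a ⟶ b)]
variable {X : Type u'} [Category.{v'} X] [∀ x y : X, PartialOrder (x ⟶ y)]

/-- An inserter of a parallel pair `r, s : a ⟶ b` in an order-enriched category. -/
def IsInserter {a b c : A} (r s : a ⟶ b) (u : c ⟶ a) : Prop :=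
  u ≫ r ≤ u ≫ s ∧
  (∀ {z : A} (v : z ⟶ a), v ≫ r ≤ v ≫ s → ∃! j : z ⟶ c, j ≫ u = v) ∧
  (∀ {z : A} (h k : z ⟶ c), h ≫ u ≤ k ≫ u → h ≤ k)

/-- `P : A ⥤ X` is solid as an ordinary functor: every (possibly large) family
`ξ i : P.obj (D i) ⟶ x` admits a universal `P`-extension. -/
def Solid (P : A ⥤ X) : Prop :=
  ∀ {I : Type w} (D : I → A) (x : X) (ξ : ∀ i, P.obj (D i) ⟶ x),
    ∃ (a : A) (α : ∀ i, D i ⟶ a) (q : x ⟶ P.obj a),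
      (∀ i, P.map (α i) = ξ i ≫ q) ∧
      (∀ (b : A) (β : ∀ i, D i ⟶ b) (f : x ⟶ P.obj b),
        (∀ i, P.map (β i) = ξ i ≫ f) →
        ∃! t : a ⟶ b, (∀ i, α i ≫ t = β i) ∧ q ≫ P.map t = f)

/-- `P : A ⥤ X` is strongly order-solid: every (possibly large) family admits a
universal `P`-extension whose comparison morphism is order-`P`-epic. -/
def StronglyOrderSolid (P : A ⥤ X) : Prop :=
  ∀ {I : Type w} (D : I → A) (x : X) (ξ : ∀ i, P.obj (D i) ⟶ x),
    ∃ (a : A) (α : ∀ i, D i ⟶ a) (q : x ⟶ P.obj a),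
      (∀ i, P.map (α i) = ξ i ≫ q) ∧
      (∀ (b : A) (β : ∀ i, D i ⟶ b) (f : x ⟶ P.obj b),
        (∀ i, P.map (β i) = ξ i ≫ f) →
        ∃! t : a ⟶ b, (∀ i, α i ≫ t = β i) ∧ q ≫ P.map t = f) ∧
      (∀ {b : A} (r s : a ⟶ b), q ≫ P.map r ≤ q ≫ P.map s → r ≤ s)

/-- `P` is order-faithful. -/
def OrderFaithful (P : A ⥤ X) : Prop :=
  ∀ {a b : A} (r s : a ⟶ b), P.map r ≤ P.map s → r ≤ s

/-- `P` preserves inserters. -/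
def PreservesInserters (P : A ⥤ X) : Prop :=
  ∀ {a b c : A} (r s : a ⟶ b) (u : c ⟶ a),
    IsInserter r s u → IsInserter (P.map r) (P.map s) (P.map u)

end Defs

/-- If `A` has inserters, an order-enriched functor `P : A ⥤ X` is strongly order-solid
iff it is solid as an ordinary functor, order-faithful, and preserves inserters. -/
theorem stronglyOrderSolid_iff_of_hasInserters
    {A : Type u} [Category.{v} A] [∀ a b : A, PartialOrder (a ⟶ b)]
    {X : Type u'} [Category.{v'} X] [∀ x y : X, PartialOrder (x ⟶ y)]
    (compMonoA : ∀ {a b c : A} (f f' : a ⟶ b) (g g' : b ⟶ c),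
      f ≤ f' → g ≤ g' → f ≫ g ≤ f' ≫ g')
    (compMonoX : ∀ {x y z : X} (f f' : x ⟶ y) (g g' : y ⟶ z),
      f ≤ f' → g ≤ g' → f ≫ g ≤ f' ≫ g')
    (P : A ⥤ X)
    (Pmono : ∀ {a b : A} (f g : a ⟶ b), f ≤ g → P.map f ≤ P.map g)
    (hA : ∀ {a b : A} (r s : a ⟶ b), ∃ (c : A) (u : c ⟶ a), IsInserter r s u) :
    StronglyOrderSolid.{w} P ↔
      (Solid.{w} P ∧ OrderFaithful P ∧ PreservesInserters P) := by
  constructor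
  · intro h
    refine ⟨?_, ?_, ?_⟩
    · -- Solid
      intro I D x ξ
      obtain ⟨a, α, q, h1, h2, _⟩ := h D x ξ
      exact ⟨a, α, q, h1, h2⟩
    · -- OrderFaithful
      intro a b r s hrs
      obtain ⟨a', α, q, h1, h2, h3⟩ :=
        h (fun _ : PUnit.{w+1} => a) (P.obj a) (fun _ => 𝟙 _)
      obtain ⟨t, ⟨ht1, ht2⟩, _⟩ := h2 a (fun _ => 𝟙 a) (𝟙 _) (by simp)
      have e1 : t ≫ r ≤ t ≫ s := by
        apply h3
        rw [P.map_comp, P.map_comp, ← Category.assoc, ht2, ← Category.assoc, ht2,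
          Category.id_comp, Category.id_comp]
        exact hrs
      have e2 : α PUnit.unit ≫ t = 𝟙 a := ht1 _
      calc r = (α PUnit.unit ≫ t) ≫ r := by rw [e2, Category.id_comp]
        _ = α PUnit.unit ≫ (t ≫ r) := Category.assoc ..
        _ ≤ α PUnit.unit ≫ (t ≫ s) := compMonoA _ _ _ _ le_rfl e1
        _ = (α PUnit.unit ≫ t) ≫ s := (Category.assoc ..).symm
        _ = s := by rw [e2, Category.id_comp]
    · -- PreservesInserters
      intro a b c r s u hu
      obtain ⟨hu1, hu2, hu3⟩ := hu
      refine ⟨?_, ?_, ?_⟩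
      · rw [← P.map_comp, ← P.map_comp]
        exact Pmono _ _ hu1
      · intro z v hv
        obtain ⟨a₀, α₀, q, _, h2, h3⟩ :=
          h (fun i : PEmpty.{w+1} => PEmpty.elim i) z (fun i => PEmpty.elim i)
        have fact : ∀ {b' : A} (f : z ⟶ P.obj b'), ∃! t : a₀ ⟶ b', q ≫ P.map t = f := by
          intro b' f
          obtain ⟨t, ⟨_, ht⟩, htu⟩ := h2 b' (fun i => PEmpty.elim i) f (fun i => PEmpty.elim i)
          exact ⟨t, ht, fun t' ht' => htu t' ⟨fun i => PEmpty.elim i, ht'⟩⟩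
        have qinj : ∀ {b' : A} (r' s' : a₀ ⟶ b'),
            q ≫ P.map r' = q ≫ P.map s' → r' = s' :=
          fun r' s' e => le_antisymm (h3 _ _ e.le) (h3 _ _ e.ge)
        obtain ⟨w, hw, _⟩ := fact v
        have hwrs : w ≫ r ≤ w ≫ s := by
          apply h3
          rw [P.map_comp, P.map_comp, ← Category.assoc, hw, ← Category.assoc, hw]
          exact hv
        obtain ⟨j', hj', hj'u⟩ := hu2 w hwrs
        refine ⟨q ≫ P.map j', ?_, ?_⟩
        · show (q ≫ P.map j') ≫ P.map u = v
          rw [Category.assoc, ← P.map_comp, hj', hw]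
        · intro j₂ hj₂
          obtain ⟨t, ht, _⟩ := fact j₂
          have : t ≫ u = w := qinj _ _ (by
            rw [P.map_comp, ← Category.assoc, ht, hj₂, hw])
          have := hj'u t this
          rw [← ht, this]
      · intro z f g hfg
        obtain ⟨a₀, α₀, q, _, h2, h3⟩ :=
          h (fun i : PEmpty.{w+1} => PEmpty.elim i) z (fun i => PEmpty.elim i)
        have fact : ∀ {b' : A} (f' : z ⟶ P.obj b'), ∃! t : a₀ ⟶ b', q ≫ P.map t = f' := by
          intro b' f'
          obtain ⟨t, ⟨_, ht⟩, htu⟩ := h2 b' (fun i => PEmpty.elim i) f' (fun i => PEmpty.elim i)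
          exact ⟨t, ht, fun t' ht' => htu t' ⟨fun i => PEmpty.elim i, ht'⟩⟩
        obtain ⟨tf, htf, _⟩ := fact f
        obtain ⟨tg, htg, _⟩ := fact g
        have e1 : tf ≫ u ≤ tg ≫ u := by
          apply h3
          rw [P.map_comp, P.map_comp, ← Category.assoc, htf, ← Category.assoc, htg]
          exact hfg
        have e2 : tf ≤ tg := hu3 _ _ e1
        calc f = q ≫ P.map tf := htf.symm
          _ ≤ q ≫ P.map tg := compMonoX _ _ _ _ le_rfl (Pmono _ _ e2)
          _ = g := htg
  · rintro ⟨hsolid, hfaith, hins⟩ I D x ξ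
    obtain ⟨a, α, q, h1, h2⟩ := hsolid D x ξ
    refine ⟨a, α, q, h1, h2, ?_⟩
    intro b r s hrs
    obtain ⟨c, u, hu⟩ := hA r s
    obtain ⟨hPu1, hPu2, hPu3⟩ := hins r s u hu
    obtain ⟨hu1, hu2, hu3⟩ := hu
    obtain ⟨j, hj, _⟩ := hPu2 q hrs
    have hαfac : ∀ i, α i ≫ r ≤ α i ≫ s := by
      intro i
      apply hfaith
      rw [P.map_comp, P.map_comp, h1 i, Category.assoc, Category.assoc]
      exact compMonoX _ _ _ _ le_rfl hrs
    have hα'ex : ∀ i, ∃ j' : D i ⟶ c, j' ≫ u = α i := fun i =>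
      ⟨(hu2 (α i) (hαfac i)).choose, (hu2 (α i) (hαfac i)).choose_spec.1⟩
    choose α' hα' using hα'ex
    have Pumono : ∀ {z : X} (f g : z ⟶ P.obj c), f ≫ P.map u = g ≫ P.map u → f = g :=
      fun f g e => le_antisymm (hPu3 _ _ e.le) (hPu3 _ _ e.ge)
    have h1' : ∀ i, P.map (α' i) = ξ i ≫ j := by
      intro i
      apply Pumono
      rw [← P.map_comp, hα' i, h1 i, Category.assoc, hj]
    obtain ⟨t, ⟨ht1, ht2⟩, _⟩ := h2 c α' j h1'
    obtain ⟨t₀, _, ht₀u⟩ := h2 a α q h1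
    have e1 : t ≫ u = 𝟙 a := by
      have ha := ht₀u (t ≫ u) ⟨fun i => by rw [← Category.assoc, ht1 i, hα' i],
        by rw [P.map_comp, ← Category.assoc, ht2, hj]⟩
      have hb := ht₀u (𝟙 a) ⟨fun i => Category.comp_id _, by simp⟩
      rw [ha, hb]
    calc r = (t ≫ u) ≫ r := by rw [e1, Category.id_comp]
      _ = t ≫ (u ≫ r) := Category.assoc ..
      _ ≤ t ≫ (u ≫ s) := compMonoA _ _ _ _ le_rfl hu1
      _ = (t ≫ u) ≫ s := (Category.assoc ..).symm
      _ = s := by rw [e1, Category.id_comp]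
end

section
/- An order-enriched functor P : A → X is strongly order-solid if and only if P is order-right adjoint and there exists a class E of order-epimorphisms in A such that: (A) all adjunction co-units lie in E; (P) pushouts of E-morphisms along arbitrary morphisms exist in A and lie in E; (W) wide pushouts (co-intersections) of possibly large families of E-morphisms with common domain exist in A and lie in E. -/
open CategoryTheory

universe w v u v' u'

section Defs

variable {A : Type u} [Category.{v} A] [∀ a b : A, PartialOrder (a ⟶ b)]
variable {X : Type u'} [Category.{v'} X] [∀ x y : X, PartialOrder (x ⟶ y)]

/-- `e` is an order-epimorphism. -/
def OrderEpi {a b : A} (e : a ⟶ b) : Prop :=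
  ∀ {z : A} (r s : b ⟶ z), e ≫ r ≤ e ≫ s → r ≤ s

/-- `(p, e')` is a pushout of `e` along `f`. -/
def IsPushoutSq {a b c d : A} (e : a ⟶ b) (f : a ⟶ c) (p : b ⟶ d) (e' : c ⟶ d) : Prop :=
  e ≫ p = f ≫ e' ∧
  ∀ {z : A} (p' : b ⟶ z) (e'' : c ⟶ z), e ≫ p' = f ≫ e'' →
    ∃! t : d ⟶ z, p ≫ t = p' ∧ e' ≫ t = e''

end Defs

section AuxE

variable {A : Type u} [Category.{v} A] [∀ a b : A, PartialOrder (a ⟶ b)]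
variable {X : Type u'} [Category.{v'} X] [∀ x y : X, PartialOrder (x ⟶ y)]

/-- Auxiliary class of morphisms for the forward direction: `e : c ⟶ d` belongs to
`GoodE P` if `e` (together with `P.map e`) arises as part of a universal `P`-extension of
a (small) sink into `P.obj c`. -/
def GoodE (P : A ⥤ X) : MorphismProperty A := fun c d e =>
  ∃ (I : Type w) (D : I → A) (ξ : ∀ i, P.obj (D i) ⟶ P.obj c) (α : ∀ i, D i ⟶ d),
    (∀ i, P.map (α i) = ξ i ≫ P.map e) ∧
    (∀ (z : A) (β : ∀ i, D i ⟶ z) (β' : c ⟶ z),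
      (∀ i, P.map (β i) = ξ i ≫ P.map β') →
      ∃ t : d ⟶ z, (∀ i, α i ≫ t = β i) ∧ e ≫ t = β') ∧
    (∀ (z : A) (r s : d ⟶ z), P.map e ≫ P.map r ≤ P.map e ≫ P.map s → r ≤ s)

end AuxE

/-- An order-enriched functor `P : A ⥤ X` is strongly order-solid iff `P` is
order-right adjoint and there is a class `E` of order-epimorphisms of `A` containing all
adjunction co-units (A), stable under pushout along arbitrary morphisms (P), and stable
under (possibly large) wide pushouts (W), both of which are required to exist. -/
theorem stronglyOrderSolid_iff_orderRightAdjoint_and_cocomplete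
    {A : Type u} [Category.{v} A] [∀ a b : A, PartialOrder (a ⟶ b)]
    {X : Type u'} [Category.{v'} X] [∀ x y : X, PartialOrder (x ⟶ y)]
    (compMonoA : ∀ {a b c : A} (f f' : a ⟶ b) (g g' : b ⟶ c),
      f ≤ f' → g ≤ g' → f ≫ g ≤ f' ≫ g')
    (compMonoX : ∀ {x y z : X} (f f' : x ⟶ y) (g g' : y ⟶ z),
      f ≤ f' → g ≤ g' → f ≫ g ≤ f' ≫ g')
    (P : A ⥤ X)
    (Pmono : ∀ {a b : A} (f g : a ⟶ b), f ≤ g → P.map f ≤ P.map g) :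
    StronglyOrderSolid.{w} P ↔
      ∃ (F : X ⥤ A) (adj : F ⊣ P),
        (∀ (x : X) (a : A) (f g : F.obj x ⟶ a),
          f ≤ g ↔ (adj.homEquiv x a) f ≤ (adj.homEquiv x a) g) ∧
        ∃ E : MorphismProperty A,
          (∀ {a b : A} (e : a ⟶ b), E e → OrderEpi e) ∧
          -- (A): all adjunction co-units lie in E
          (∀ a : A, E (adj.counit.app a)) ∧
          -- (P): pushouts of E-morphisms along arbitrary morphisms exist and lie in E
          (∀ {a b c : A} (e : a ⟶ b) (f : a ⟶ c), E e →
            ∃ (d : A) (p : b ⟶ d) (e' : c ⟶ d), IsPushoutSq e f p e' ∧ E e') ∧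
          -- (W): wide pushouts of possibly large families of E-morphisms exist, lie in E
          (∀ {I : Type w} {a : A} {b : I → A} (e : ∀ i, a ⟶ b i), (∀ i, E (e i)) →
            ∃ (d : A) (c : ∀ i, b i ⟶ d) (m : a ⟶ d),
              (∀ i, e i ≫ c i = m) ∧
              (∀ {z : A} (c' : ∀ i, b i ⟶ z) (m' : a ⟶ z), (∀ i, e i ≫ c' i = m') →
                ∃! t : d ⟶ z, (∀ i, c i ≫ t = c' i) ∧ m ≫ t = m') ∧
              E m) := by
  constructor
  · -- Forward direction
    intro hsolid
    -- `P` reflects the order (hence is faithful).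
    have Prefl : ∀ {a b : A} (r s : a ⟶ b), P.map r ≤ P.map s → r ≤ s := by
      intro a b r s hrs
      obtain ⟨a', α, q, hα, hUP, hOE⟩ :=
        hsolid (fun _ : PUnit.{w + 1} => a) (P.obj a) (fun _ => 𝟙 _)
      obtain ⟨t, ⟨ht1, ht2⟩, -⟩ := hUP a (fun _ => 𝟙 a) (𝟙 _) (fun _ => by simp)
      have h1 : q ≫ P.map (t ≫ r) ≤ q ≫ P.map (t ≫ s) := by
        rw [P.map_comp, P.map_comp, ← Category.assoc, ← Category.assoc, ht2,
          Category.id_comp, Category.id_comp]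
        exact hrs
      have h2 := hOE _ _ h1
      have h3 := compMonoA (α PUnit.unit) (α PUnit.unit) _ _ le_rfl h2
      rw [← Category.assoc, ← Category.assoc, ht1 PUnit.unit, Category.id_comp,
        Category.id_comp] at h3
      exact h3
    have Pfaith : ∀ {a b : A} {r s : a ⟶ b}, P.map r = P.map s → r = s := by
      intro a b r s h
      exact le_antisymm (Prefl _ _ h.le) (Prefl _ _ h.ge)
    -- Construction of the left adjoint, with an order-isomorphism `homEquiv`.
    have main : ∃ (F : X ⥤ A) (adj : F ⊣ P),
        ∀ (x : X) (a : A) (f g : F.obj x ⟶ a),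
          f ≤ g ↔ (adj.homEquiv x a) f ≤ (adj.homEquiv x a) g := by
      have key : ∀ x : X, ∃ (a : A) (q : x ⟶ P.obj a),
          (∀ (b : A) (f : x ⟶ P.obj b), ∃! t : a ⟶ b, q ≫ P.map t = f) ∧
          (∀ (b : A) (r s : a ⟶ b), q ≫ P.map r ≤ q ≫ P.map s → r ≤ s) := by
        intro x
        obtain ⟨a, α, q, -, hUP, hOE⟩ :=
          hsolid (fun i : PEmpty.{w + 1} => i.elim) x (fun i => i.elim)
        refine ⟨a, q, fun b f => ?_, fun b r s h => hOE r s h⟩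
        obtain ⟨t, ⟨-, ht⟩, hu⟩ := hUP b (fun i => i.elim) f (fun i => i.elim)
        exact ⟨t, ht, fun t' ht' => hu t' ⟨fun i => i.elim, ht'⟩⟩
      choose Fo qf hUPe hOEe using key
      have uniqF : ∀ (x : X) (b : A) (t t' : Fo x ⟶ b),
          qf x ≫ P.map t = qf x ≫ P.map t' → t = t' := by
        intro x b t t' h
        exact le_antisymm (hOEe x b t t' h.le) (hOEe x b t' t h.ge)
      have hmapex : ∀ (x y : X) (f : x ⟶ y), ∃ t : Fo x ⟶ Fo y,
          qf x ≫ P.map t = f ≫ qf y := fun x y f => (hUPe x (Fo y) (f ≫ qf y)).exists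
      choose Fm hFm using hmapex
      have hFm' : ∀ (x y : X) (f : x ⟶ y) {c : A} (u : P.obj (Fo y) ⟶ P.obj c),
          qf x ≫ P.map (Fm x y f) ≫ u = f ≫ qf y ≫ u := by
        intro x y f c u
        rw [← Category.assoc, hFm, Category.assoc]
      have hinvex : ∀ (x : X) (a : A) (f : x ⟶ P.obj a), ∃ t : Fo x ⟶ a,
          qf x ≫ P.map t = f := fun x a f => (hUPe x a f).exists
      choose inv hinv using hinvex
      refine ⟨{ obj := Fo
                map := fun {x y} f => Fm x y f
                map_id := fun x => uniqF x _ _ _ (by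
                  show qf x ≫ P.map (Fm x x (𝟙 x)) = qf x ≫ P.map (𝟙 (Fo x))
                  rw [hFm]; simp)
                map_comp := fun {x y z} f g => uniqF x _ _ _ (by
                  show qf x ≫ P.map (Fm x z (f ≫ g)) = qf x ≫ P.map (Fm x y f ≫ Fm y z g)
                  rw [hFm, P.map_comp, hFm', hFm, Category.assoc]) },
              Adjunction.mkOfHomEquiv
                { homEquiv := fun x a =>
                    { toFun := fun t => qf x ≫ P.map t
                      invFun := fun f => inv x a f
                      left_inv := fun t => uniqF x a _ _ (by rw [hinv])
                      right_inv := fun f => hinv x a f }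
                  homEquiv_naturality_left_symm := fun {x' x a} f g => by
                    show inv x' a (f ≫ g) = Fm x' x f ≫ inv x a g
                    apply uniqF
                    rw [hinv, P.map_comp, ← Category.assoc, hFm, Category.assoc, hinv]
                  homEquiv_naturality_right := fun {x a b} f g => by
                    show qf x ≫ P.map (f ≫ g) = (qf x ≫ P.map f) ≫ P.map g
                    rw [P.map_comp, ← Category.assoc] }, ?_⟩
      intro x a f g
      simp only [Adjunction.mkOfHomEquiv_homEquiv, Equiv.coe_fn_mk]
      constructor
      · intro h
        exact compMonoX _ _ _ _ le_rfl (Pmono _ _ h)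
      · intro h
        exact hOEe x a f g h
    obtain ⟨F, adj, hord⟩ := main
    -- Derived abstract facts about the adjunction.
    have hOEu : ∀ (x : X) (a : A) (r s : F.obj x ⟶ a),
        adj.unit.app x ≫ P.map r ≤ adj.unit.app x ≫ P.map s → r ≤ s := by
      intro x a r s h
      refine (hord x a r s).mpr ?_
      rw [adj.homEquiv_unit, adj.homEquiv_unit]
      exact h
    have uniqF : ∀ (x : X) (a : A) (t t' : F.obj x ⟶ a),
        adj.unit.app x ≫ P.map t = adj.unit.app x ≫ P.map t' → t = t' := by
      intro x a t t' h
      exact le_antisymm (hOEu x a t t' h.le) (hOEu x a t' t h.ge)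
    have hcu : ∀ a : A, adj.unit.app (P.obj a) ≫ P.map (adj.counit.app a) = 𝟙 (P.obj a) :=
      fun a => adj.right_triangle_components a
    refine ⟨F, adj, hord, GoodE.{w} P, ?_, ?_, ?_, ?_⟩
    · -- E consists of order-epis
      rintro a b e ⟨I, D, ξ, α, -, -, hc⟩ z r s h
      refine hc z r s ?_
      rw [← P.map_comp, ← P.map_comp]
      exact Pmono _ _ h
    · -- counits are in E
      intro a
      refine ⟨PUnit.{w + 1}, fun _ => a, fun _ => adj.unit.app (P.obj a), fun _ => 𝟙 a,
        ?_, ?_, ?_⟩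
      · intro i
        rw [hcu a]
        simp
      · intro z β β' hβ
        refine ⟨β PUnit.unit, fun i => by cases i; simp, ?_⟩
        apply uniqF
        rw [P.map_comp, ← Category.assoc, hcu a]
        simp only [Functor.id_obj, Category.id_comp]
        exact hβ PUnit.unit
      · intro z r s h
        apply Prefl
        have := compMonoX (adj.unit.app (P.obj a)) (adj.unit.app (P.obj a)) _ _ le_rfl h
        rw [← Category.assoc, ← Category.assoc, hcu a] at this
        simp only [Functor.id_obj, Category.id_comp] at this
        exact this
    · -- pushouts of E-morphisms exist and lie in E
      intro a b c e f he
      obtain ⟨I, D, ξ, α, ha, hb, hc⟩ := he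
      have ecancel : ∀ {z : A} (u v : b ⟶ z), e ≫ u = e ≫ v → u = v := by
        intro z u v h
        have h' : P.map e ≫ P.map u = P.map e ≫ P.map v := by
          rw [← P.map_comp, ← P.map_comp, h]
        exact le_antisymm (hc z u v h'.le) (hc z v u h'.ge)
      obtain ⟨d', α', q', ha', hUP', hOE'⟩ :=
        hsolid (fun j : Option (Option I) =>
            match j with
            | none => c
            | some none => a
            | some (some i) => D i)
          (P.obj c)
          (fun j =>
            match j with
            | none => 𝟙 (P.obj c)
            | some none => P.map f
            | some (some i) => ξ i ≫ P.map f)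
      have haN : P.map (α' none) = q' := by simpa using ha' none
      have haSN : P.map (α' (some none)) = P.map f ≫ q' := by simpa using ha' (some none)
      have haSS : ∀ i, P.map (α' (some (some i))) = ξ i ≫ P.map f ≫ q' := by
        intro i
        simpa using ha' (some (some i))
      obtain ⟨p, hp1, hp2⟩ := hb d' (fun i => α' (some (some i))) (α' (some none))
        (by
          intro i
          rw [haSS i, haSN])
      have hsq1 : e ≫ p = f ≫ α' none := by
        apply Pfaith
        rw [hp2, haSN, P.map_comp, ← haN]
      refine ⟨d', p, α' none, ⟨hsq1, ?_⟩, ?_⟩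
      · -- universal property of the pushout
        intro z p' e'' hsq'
        have hsq'' : P.map e ≫ P.map p' = P.map f ≫ P.map e'' := by
          rw [← P.map_comp, ← P.map_comp, hsq']
        obtain ⟨t, ⟨htα, htq⟩, htu⟩ := hUP' z
          (fun j =>
            match j with
            | none => e''
            | some none => e ≫ p'
            | some (some i) => α i ≫ p')
          (P.map e'')
          (by
            intro j
            match j with
            | none =>
                show P.map e'' = 𝟙 (P.obj c) ≫ P.map e''
                rw [Category.id_comp]
            | some none =>
                show P.map (e ≫ p') = P.map f ≫ P.map e''
                rw [P.map_comp, hsq'']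
            | some (some i) =>
                show P.map (α i ≫ p') = (ξ i ≫ P.map f) ≫ P.map e''
                simp only [P.map_comp, ha i, Category.assoc, hsq''])
        refine ⟨t, ⟨?_, ?_⟩, ?_⟩
        · apply ecancel
          rw [← Category.assoc, hp2]
          exact htα (some none)
        · exact htα none
        · intro t₀ ht₀
          obtain ⟨h1, h2⟩ := ht₀
          refine htu t₀ ⟨?_, ?_⟩
          · intro j
            match j with
            | none => exact h2
            | some none =>
                show α' (some none) ≫ t₀ = e ≫ p'
                rw [← hp2, Category.assoc, h1]
            | some (some i) =>
                show α' (some (some i)) ≫ t₀ = α i ≫ p'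
                rw [← hp1 i, Category.assoc, h1]
          · show q' ≫ P.map t₀ = P.map e''
            rw [← haN, ← P.map_comp, h2]
      · -- the opposite leg is again in E
        refine ⟨Option I,
          (fun j => match j with | none => a | some i => D i),
          (fun j => match j with | none => P.map f | some i => ξ i ≫ P.map f),
          (fun j => match j with | none => α' (some none) | some i => α' (some (some i))),
          ?_, ?_, ?_⟩
        · intro j
          match j with
          | none =>
              show P.map (α' (some none)) = P.map f ≫ P.map (α' none)
              rw [haN, haSN]
          | some i =>
              show P.map (α' (some (some i))) = (ξ i ≫ P.map f) ≫ P.map (α' none)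
              rw [haN, haSS i, Category.assoc]
        · intro z β β' hβ
          obtain ⟨t, ⟨htα, htq⟩, htu⟩ := hUP' z
            (fun j =>
              match j with
              | none => β'
              | some none => β none
              | some (some i) => β (some i))
            (P.map β')
            (by
              intro j
              match j with
              | none =>
                  show P.map β' = 𝟙 (P.obj c) ≫ P.map β'
                  rw [Category.id_comp]
              | some none => exact hβ none
              | some (some i) => exact hβ (some i))
          refine ⟨t, fun j => ?_, ?_⟩
          · match j with
            | none => exact htα (some none)
            | some i => exact htα (some (some i))
          · exact htα none
        · intro z r s h
          apply hOE' r s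
          rwa [haN] at h
    · -- wide pushouts of E-morphisms exist and lie in E
      intro ι a bfam efam hEfam
      choose Ii Df ξf αf hfa hfb hfc using hEfam
      have ecancel : ∀ (i : ι) {z : A} (u v : bfam i ⟶ z),
          efam i ≫ u = efam i ≫ v → u = v := by
        intro i z u v h
        have h' : P.map (efam i) ≫ P.map u = P.map (efam i) ≫ P.map v := by
          rw [← P.map_comp, ← P.map_comp, h]
        exact le_antisymm (hfc i z u v h'.le) (hfc i z v u h'.ge)
      obtain ⟨dd, α', q', ha', hUP', hOE'⟩ :=
        hsolid (fun j : Option (Σ i : ι, Ii i) =>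
            match j with
            | none => a
            | some ⟨i, k⟩ => Df i k)
          (P.obj a)
          (fun j =>
            match j with
            | none => 𝟙 (P.obj a)
            | some ⟨i, k⟩ => ξf i k)
      have haN : P.map (α' none) = q' := by simpa using ha' none
      have haS : ∀ (i : ι) (k : Ii i), P.map (α' (some ⟨i, k⟩)) = ξf i k ≫ q' := by
        intro i k
        simpa using ha' (some ⟨i, k⟩)
      have hci : ∀ i : ι, ∃ t : bfam i ⟶ dd,
          (∀ k, αf i k ≫ t = α' (some ⟨i, k⟩)) ∧ efam i ≫ t = α' none := by
        intro i
        refine hfb i dd (fun k => α' (some ⟨i, k⟩)) (α' none) ?_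
        intro k
        rw [haN, haS i k]
      choose cmap hc1 hc2 using hci
      refine ⟨dd, cmap, α' none, hc2, ?_, ?_⟩
      · -- universal property of the wide pushout
        intro z c' m' hcomm
        obtain ⟨t, ⟨htα, htq⟩, htu⟩ := hUP' z
          (fun j =>
            match j with
            | none => m'
            | some ⟨i, k⟩ => αf i k ≫ c' i)
          (P.map m')
          (by
            intro j
            match j with
            | none =>
                show P.map m' = 𝟙 (P.obj a) ≫ P.map m'
                rw [Category.id_comp]
            | some ⟨i, k⟩ =>
                show P.map (αf i k ≫ c' i) = ξf i k ≫ P.map m'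
                rw [P.map_comp, hfa i k, Category.assoc, ← P.map_comp, hcomm i])
        refine ⟨t, ⟨fun i => ?_, ?_⟩, ?_⟩
        · apply ecancel i
          rw [← Category.assoc, hc2 i, hcomm i]
          exact htα none
        · exact htα none
        · intro t₀ ht₀
          obtain ⟨h1, h2⟩ := ht₀
          refine htu t₀ ⟨?_, ?_⟩
          · intro j
            match j with
            | none => exact h2
            | some ⟨i, k⟩ =>
                show α' (some ⟨i, k⟩) ≫ t₀ = αf i k ≫ c' i
                rw [← hc1 i k, Category.assoc, h1 i]
          · show q' ≫ P.map t₀ = P.map m'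
            rw [← haN, ← P.map_comp, h2]
      · -- the wide-pushout diagonal is in E
        refine ⟨(Σ i : ι, Ii i),
          (fun jk => Df jk.1 jk.2),
          (fun jk => ξf jk.1 jk.2),
          (fun jk => α' (some jk)),
          ?_, ?_, ?_⟩
        · intro jk
          rw [haN]
          exact haS jk.1 jk.2
        · intro z β β' hβ
          obtain ⟨t, ⟨htα, htq⟩, htu⟩ := hUP' z
            (fun j =>
              match j with
              | none => β'
              | some jk => β jk)
            (P.map β')
            (by
              intro j
              match j with
              | none =>
                  show P.map β' = 𝟙 (P.obj a) ≫ P.map β'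
                  rw [Category.id_comp]
              | some jk => exact hβ jk)
          exact ⟨t, fun jk => htα (some jk), htα none⟩
        · intro z r s h
          apply hOE' r s
          rwa [haN] at h
  · -- Backward direction
    rintro ⟨F, adj, hord, E, hepi, hcounit, hpush, hwide⟩
    intro I D x ξ
    have hstep : ∀ i, ∃ (d : A) (p : D i ⟶ d) (e' : F.obj x ⟶ d),
        IsPushoutSq (adj.counit.app (D i)) (F.map (ξ i)) p e' ∧ E e' :=
      fun i => hpush (adj.counit.app (D i)) (F.map (ξ i)) (hcounit (D i))
    choose d p e' hsq hE' using hstep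
    obtain ⟨dd, cmaps, m, hcm, hwUP, hEm⟩ := hwide e' hE'
    have fact1 : ∀ i, P.map (p i) = ξ i ≫ adj.unit.app x ≫ P.map (e' i) := by
      intro i
      calc P.map (p i) = 𝟙 _ ≫ P.map (p i) := by rw [Category.id_comp]
        _ = (adj.unit.app _ ≫ P.map (adj.counit.app (D i))) ≫ P.map (p i) := by
              rw [adj.right_triangle_components]
        _ = adj.unit.app _ ≫ P.map (adj.counit.app (D i) ≫ p i) := by
              rw [P.map_comp, Category.assoc]
        _ = adj.unit.app _ ≫ P.map (F.map (ξ i) ≫ e' i) := by rw [(hsq i).1]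
        _ = (adj.unit.app _ ≫ P.map (F.map (ξ i))) ≫ P.map (e' i) := by
              rw [P.map_comp, Category.assoc]
        _ = (ξ i ≫ adj.unit.app x) ≫ P.map (e' i) := by
              rw [← Functor.comp_map, ← adj.unit.naturality (ξ i), Functor.id_map]
        _ = ξ i ≫ adj.unit.app x ≫ P.map (e' i) := by rw [Category.assoc]
    refine ⟨dd, fun i => p i ≫ cmaps i, adj.unit.app x ≫ P.map m, ?_, ?_, ?_⟩
    · intro i
      rw [P.map_comp, fact1 i, Category.assoc, Category.assoc, ← P.map_comp, hcm i]
    · -- universal property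
      intro b β f hyp
      have hfs : adj.unit.app x ≫ P.map (F.map f ≫ adj.counit.app b) = f := by
        have h1 : (adj.homEquiv x b) ((adj.homEquiv x b).symm f) = f :=
          (adj.homEquiv x b).apply_symm_apply f
        rwa [adj.homEquiv_counit, adj.homEquiv_unit] at h1
      set fs : F.obj x ⟶ b := F.map f ≫ adj.counit.app b with hfsdef
      have hco : ∀ i, adj.counit.app (D i) ≫ β i = F.map (ξ i) ≫ fs := by
        intro i
        apply (adj.homEquiv (P.obj (D i)) b).injective
        rw [adj.homEquiv_unit, adj.homEquiv_unit]
        calc adj.unit.app _ ≫ P.map (adj.counit.app (D i) ≫ β i)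
            = (adj.unit.app _ ≫ P.map (adj.counit.app (D i))) ≫ P.map (β i) := by
              rw [P.map_comp, Category.assoc]
          _ = P.map (β i) := by
              rw [adj.right_triangle_components]
              simp only [Functor.id_obj, Category.id_comp]
          _ = ξ i ≫ f := hyp i
          _ = ξ i ≫ adj.unit.app x ≫ P.map fs := by rw [hfs]
          _ = (ξ i ≫ adj.unit.app x) ≫ P.map fs := by rw [Category.assoc]
          _ = (adj.unit.app _ ≫ P.map (F.map (ξ i))) ≫ P.map fs := by
              rw [← Functor.comp_map, ← adj.unit.naturality (ξ i), Functor.id_map]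
          _ = adj.unit.app _ ≫ P.map (F.map (ξ i) ≫ fs) := by
              simp only [hfsdef, P.map_comp, Category.assoc]
      have ht : ∀ i, ∃! t : d i ⟶ b, p i ≫ t = β i ∧ e' i ≫ t = fs :=
        fun i => (hsq i).2 (β i) fs (hco i)
      obtain ⟨T, ⟨hT1, hT2⟩, hTu⟩ :=
        hwUP (fun i => (ht i).choose) fs (fun i => (ht i).choose_spec.1.2)
      refine ⟨T, ⟨?_, ?_⟩, ?_⟩
      · intro i
        rw [Category.assoc, hT1 i, (ht i).choose_spec.1.1]
      · rw [Category.assoc, ← P.map_comp, hT2, hfs]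
      · intro T' hT'
        obtain ⟨h1, h2⟩ := hT'
        have hm : m ≫ T' = fs := by
          apply (adj.homEquiv x b).injective
          rw [adj.homEquiv_unit, adj.homEquiv_unit, hfs, P.map_comp, ← Category.assoc]
          exact h2
        refine hTu T' ⟨?_, hm⟩
        intro i
        refine (ht i).choose_spec.2 (cmaps i ≫ T') ⟨?_, ?_⟩
        · rw [← Category.assoc]
          exact h1 i
        · rw [← Category.assoc, hcm i, hm]
    · -- order-epi condition
      intro z r s h
      have h' : (adj.homEquiv x z) (m ≫ r) ≤ (adj.homEquiv x z) (m ≫ s) := by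
        rw [adj.homEquiv_unit, adj.homEquiv_unit, P.map_comp, P.map_comp,
          ← Category.assoc, ← Category.assoc]
        exact h
      have hms : m ≫ r ≤ m ≫ s := (hord x z (m ≫ r) (m ≫ s)).mpr h'
      exact hepi m hEm r s hms
end
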